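/- arXiv:2003.00957 — 2 statements merged into one kernel-verified Lean document; each statement's English description precedes it below -/
import Mathlib

section
/- Tensoring over R with a weight module preserves short exact sequences of weight modules: if 0 → M → S → N → 0 is a short exact sequence of weight R-modules (each a direct sum of weight spaces over maximal ideals, with all weight spaces finite-dimensional over the residue fields) and M' is another weight R-module, then 0 → M ⊗_R M' → S ⊗_R M' → N ⊗_R M' → 0 is exact. -/
/-!
A weight module is spanned by its weight spaces, and the weight space at a maximal ideal `m` is a
vector space over the residue field `R ⧸ m`, hence a semisimple `R`-module. So the middle term `S`
is semisimple, the injection `f` splits, and a split injection stays injective after tensoring.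
Surjectivity and exactness in the middle are right exactness of `- ⊗[R] M'`.
-/

open scoped TensorProduct

def weightSpace (R : Type*) [CommRing R] (M : Type*) [AddCommGroup M] [Module R M]
    (I : Ideal R) : Submodule R M where
  carrier := {v | ∀ r ∈ I, r • v = 0}
  add_mem' := by
    intro a b ha hb r hr
    rw [smul_add, ha r hr, hb r hr, add_zero]
  zero_mem' := by intro r hr; simp
  smul_mem' := by
    intro c v hv r hr
    rw [smul_comm, hv r hr, smul_zero]

theorem isTorsionBySet_weightSpace (R : Type*) [CommRing R] (M : Type*) [AddCommGroup M]
    [Module R M] (I : Ideal R) : Module.IsTorsionBySet R (weightSpace R M I) I :=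
  fun v r => Subtype.ext (v.2 r r.2)

theorem isSemisimpleModule_weightSpace (R : Type*) [CommRing R] (M : Type*) [AddCommGroup M]
    [Module R M] (m : Ideal R) [m.IsMaximal] : IsSemisimpleModule R (weightSpace R M m) := by
  have htors := isTorsionBySet_weightSpace R M m
  let _ := htors.module
  let _ := Ideal.Quotient.field m
  exact htors.isSemisimpleModule_iff.mp inferInstance

theorem isSemisimpleModule_of_iSup_weightSpace_eq_top {R : Type*} [CommRing R] {M : Type*}
    [AddCommGroup M] [Module R M]
    (h : ⨆ m : MaximalSpectrum R, weightSpace R M m.asIdeal = ⊤) : IsSemisimpleModule R M :=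
  isSemisimpleModule_of_isSemisimpleModule_submodule'
    (fun m => isSemisimpleModule_weightSpace R M m.asIdeal) h

theorem LinearMap.rTensor_injective_of_isSemisimpleModule {R : Type*} [CommRing R]
    {M S : Type*} (Q : Type*) [AddCommGroup M] [Module R M] [AddCommGroup S] [Module R S]
    [AddCommGroup Q] [Module R Q] [IsSemisimpleModule R S]
    (f : M →ₗ[R] S) (hf : Function.Injective f) : Function.Injective (f.rTensor Q) := by
  obtain ⟨r, hr⟩ := IsSemisimpleModule.extension_property f hf LinearMap.id
  have hleft : Function.LeftInverse (r.rTensor Q) (f.rTensor Q) := fun x => by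
    rw [← LinearMap.comp_apply, ← LinearMap.rTensor_comp, hr, LinearMap.rTensor_id,
      LinearMap.id_apply]
  exact hleft.injective

theorem stmt5_general {R : Type*} [CommRing R]
    {M S N M' : Type*}
    [AddCommGroup M] [Module R M] [AddCommGroup S] [Module R S]
    [AddCommGroup N] [Module R N] [AddCommGroup M'] [Module R M']
    [DecidableEq (MaximalSpectrum R)]
    (hS : DirectSum.IsInternal (fun m : MaximalSpectrum R => weightSpace R S m.asIdeal))
    (f : M →ₗ[R] S) (g : S →ₗ[R] N)
    (hf : Function.Injective f) (hg : Function.Surjective g)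
    (hfg : LinearMap.range f = LinearMap.ker g) :
    Function.Injective (f.rTensor M') ∧ Function.Surjective (g.rTensor M') ∧
      LinearMap.range (f.rTensor M') = LinearMap.ker (g.rTensor M') := by
  have := isSemisimpleModule_of_iSup_weightSpace_eq_top hS.submodule_iSup_eq_top
  have hexact : Function.Exact (f.rTensor M') (g.rTensor M') :=
    rTensor_exact M' (LinearMap.exact_iff.mpr hfg.symm) hg
  exact ⟨f.rTensor_injective_of_isSemisimpleModule M' hf, LinearMap.rTensor_surjective M' hg,
    (LinearMap.exact_iff.mp hexact).symm⟩

/-- Tensoring with a weight module preserves short exact sequences of weight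
modules: if `M, S, N, M'` are weight `R`-modules (direct sums of their weight
spaces over maximal ideals, with all weight spaces finite-dimensional over the
residue fields) and `0 → M → S → N → 0` is exact, then
`0 → M ⊗[R] M' → S ⊗[R] M' → N ⊗[R] M' → 0` is exact. -/
theorem stmt5 {R : Type*} [CommRing R]
    {M S N M' : Type*}
    [AddCommGroup M] [Module R M] [AddCommGroup S] [Module R S]
    [AddCommGroup N] [Module R N] [AddCommGroup M'] [Module R M']
    [DecidableEq (MaximalSpectrum R)]
    (hM : DirectSum.IsInternal (fun m : MaximalSpectrum R => weightSpace R M m.asIdeal))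
    (hS : DirectSum.IsInternal (fun m : MaximalSpectrum R => weightSpace R S m.asIdeal))
    (hN : DirectSum.IsInternal (fun m : MaximalSpectrum R => weightSpace R N m.asIdeal))
    (hM' : DirectSum.IsInternal (fun m : MaximalSpectrum R => weightSpace R M' m.asIdeal))
    (hMfin : ∀ m : MaximalSpectrum R, Module.Finite R (weightSpace R M m.asIdeal))
    (hSfin : ∀ m : MaximalSpectrum R, Module.Finite R (weightSpace R S m.asIdeal))
    (hNfin : ∀ m : MaximalSpectrum R, Module.Finite R (weightSpace R N m.asIdeal))
    (hM'fin : ∀ m : MaximalSpectrum R, Module.Finite R (weightSpace R M' m.asIdeal))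
    (f : M →ₗ[R] S) (g : S →ₗ[R] N)
    (hf : Function.Injective f) (hg : Function.Surjective g)
    (hfg : LinearMap.range f = LinearMap.ker g) :
    Function.Injective (f.rTensor M') ∧ Function.Surjective (g.rTensor M') ∧
      LinearMap.range (f.rTensor M') = LinearMap.ker (g.rTensor M') :=
  stmt5_general hS f g hf hg hfg
end

section
/- Let m, n be positive integers and consider (m,n)-lattice paths on the cylinder ℝ²/ℤ(m,n) (monotone lattice paths with m east steps and n north steps, viewed as {0,1}-valued configurations on the edge lattices satisfying the ice rule). Given two such paths π_1, π_2, define their pointwise max and min on each vertical line; then there exist unique paths π_1 ∨ π_2 and π_1 ∧ π_2 such that (π_1 ∨ π_2) + (π_1 ∧ π_2) = π_1 + π_2 as configurations, and π_1 ∨ π_2 ≥ π_1, π_2 ≥ π_1 ∧ π_2 in the partial order where π ≥ ν means every segment of π overlaps with ν or lies north of ν. -/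
/-- An `(m,n)`-lattice path on the cylinder `ℝ²/ℤ(m,n)`, encoded by its height
function `y : ℤ → ℤ` (the height of the path over column `x`): it is monotone
(the path is a monotone lattice path) and quasi-periodic, `y(x+m) = y(x)+n`
(it is a loop on the cylinder, with `m` east steps and `n` north steps per
period). -/
def IsPath (m n : ℤ) (y : ℤ → ℤ) : Prop :=
  Monotone y ∧ ∀ x, y (x + m) = y x + n

namespace IsPath

variable {m n : ℤ} {y₁ y₂ : ℤ → ℤ}

theorem sup (h₁ : IsPath m n y₁) (h₂ : IsPath m n y₂) : IsPath m n (y₁ ⊔ y₂) :=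
  ⟨h₁.1.sup h₂.1, fun x => by simp [h₁.2 x, h₂.2 x, max_add_add_right]⟩

theorem inf (h₁ : IsPath m n y₁) (h₂ : IsPath m n y₂) : IsPath m n (y₁ ⊓ y₂) :=
  ⟨h₁.1.inf h₂.1, fun x => by simp [h₁.2 x, h₂.2 x, min_add_add_right]⟩

end IsPath

namespace Multiset

variable {α : Type*}

theorem pair_eq_pair_iff {a b c d : α} :
    ({a, b} : Multiset α) = {c, d} ↔ a = c ∧ b = d ∨ a = d ∧ b = c := by
  simp only [insert_eq_cons, cons_eq_cons, singleton_eq_cons_iff, singleton_inj]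
  grind

theorem pair_max_min [LinearOrder α] (a b : α) : ({max a b, min a b} : Multiset α) = {a, b} := by
  rcases le_total a b with h | h
  · rw [max_eq_right h, min_eq_left h, pair_comm]
  · rw [max_eq_left h, min_eq_right h]

theorem eq_max_min_of_pair_eq [LinearOrder α] {a b c d : α}
    (h : ({c, d} : Multiset α) = {a, b}) (hac : a ≤ c) (hbc : b ≤ c) :
    c = max a b ∧ d = min a b := by
  rcases pair_eq_pair_iff.1 h with ⟨rfl, rfl⟩ | ⟨rfl, rfl⟩
  · exact ⟨(max_eq_left hbc).symm, (min_eq_right hbc).symm⟩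
  · exact ⟨(max_eq_right hac).symm, (min_eq_left hac).symm⟩

end Multiset

theorem stmt15_general (m n : ℤ)
    (y1 y2 : ℤ → ℤ) (h1 : IsPath m n y1) (h2 : IsPath m n y2) :
    ∃! p : (ℤ → ℤ) × (ℤ → ℤ),
      IsPath m n p.1 ∧ IsPath m n p.2 ∧
      (∀ x : ℤ, ({p.1 x, p.2 x} : Multiset ℤ) = {y1 x, y2 x}) ∧
      (∀ x : ℤ, y1 x ≤ p.1 x ∧ y2 x ≤ p.1 x ∧ p.2 x ≤ y1 x ∧ p.2 x ≤ y2 x) := by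
  refine ⟨(y1 ⊔ y2, y1 ⊓ y2), ⟨h1.sup h2, h1.inf h2, fun x => Multiset.pair_max_min _ _,
    fun x => ⟨le_max_left _ _, le_max_right _ _, min_le_left _ _, min_le_right _ _⟩⟩, ?_⟩
  rintro ⟨p₁, p₂⟩ ⟨-, -, hpair, hle⟩
  have hp x := Multiset.eq_max_min_of_pair_eq (hpair x) (hle x).1 (hle x).2.1
  exact Prod.ext (funext fun x => (hp x).1) (funext fun x => (hp x).2)

/-- Given two `(m,n)`-paths `y₁, y₂` on the cylinder, there is a unique pair of
paths `(π₁ ∨ π₂, π₁ ∧ π₂)` whose sum, as configurations, equals `π₁ + π₂`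
(per column, the multiset of heights agrees) and which satisfy
`π₁ ∨ π₂ ≥ π₁, π₂ ≥ π₁ ∧ π₂` in the north-dominance partial order
(pointwise comparison of heights). -/
theorem stmt15 (m n : ℤ) (hm : 0 < m) (hn : 0 < n)
    (y1 y2 : ℤ → ℤ) (h1 : IsPath m n y1) (h2 : IsPath m n y2) :
    ∃! p : (ℤ → ℤ) × (ℤ → ℤ),
      IsPath m n p.1 ∧ IsPath m n p.2 ∧
      (∀ x : ℤ, ({p.1 x, p.2 x} : Multiset ℤ) = {y1 x, y2 x}) ∧
      (∀ x : ℤ, y1 x ≤ p.1 x ∧ y2 x ≤ p.1 x ∧ p.2 x ≤ y1 x ∧ p.2 x ≤ y2 x) :=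
  stmt15_general m n y1 y2 h1 h2
end
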